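/- (Left-order gap theorem.) Let ⟨v₁,…,vₙ⟩ be a left order (each node's potential parents are the nodes to its right within the order plus all dormant nodes), and let D = V \ {v₁,…,vₙ}. Suppose the last node's score does not depend on the dormant nodes, i.e. ŝ(vₙ, D) = ŝ(vₙ, ∅). Then for any dormant node h, the maximal score over completions of ⟨v₁,…,v_{n-1}, h⟩ is at least the maximal score over completions of ⟨v₁,…,vₙ, h⟩ (as left orders extended by appending remaining nodes to the back). -/

import Mathlib

open Finset

noncomputable def shat {V : Type*} [DecidableEq V] (σ : V → Finset V → ℝ) (v : V) (S : Finset V) : ℝ :=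
  S.powerset.sup' S.powerset_nonempty (σ v)

noncomputable def scoreL {V : Type*} [DecidableEq V] (σ : V → Finset V → ℝ) : List V → Finset V → ℝ
  | [], _ => 0
  | v :: t, D => shat σ v (t.toFinset ∪ D) + scoreL σ t D

noncomputable def sstar {V : Type*} [DecidableEq V] (σ : V → Finset V → ℝ) (A B : Finset V) : ℝ :=
  sSup ((fun l => scoreL σ l B) '' {l : List V | l.Nodup ∧ l.toFinset = A})

lemma shat_mono {V : Type*} [DecidableEq V] (σ : V → Finset V → ℝ) (v : V)
    {S T : Finset V} (hST : S ⊆ T) : shat σ v S ≤ shat σ v T := by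
  apply Finset.sup'_le
  intro P hP
  exact Finset.le_sup' (σ v)
    (Finset.mem_powerset.mpr ((Finset.mem_powerset.mp hP).trans hST))

lemma scoreL_mono_append {V : Type*} [DecidableEq V] (σ : V → Finset V → ℝ)
    (p : List V) {l1 l2 : List V} (hF : l1.toFinset = l2.toFinset)
    (hle : scoreL σ l1 ∅ ≤ scoreL σ l2 ∅) :
    scoreL σ (p ++ l1) ∅ ≤ scoreL σ (p ++ l2) ∅ := by
  induction p with
  | nil => simpa
  | cons a p ih =>
    have hpf : (p ++ l1).toFinset = (p ++ l2).toFinset := by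
      simp [List.toFinset_append, hF]
    simp only [List.cons_append, scoreL, List.append_eq, hpf]
    linarith

/-- Left-order gap theorem: if the score of the last node vₙ of a left order does not
depend on the dormant nodes D, then for any dormant node h, the maximal score over
completions of ⟨v₁,…,v_{n-1},h⟩ is at least the maximal score over completions of
⟨v₁,…,vₙ,h⟩. -/
theorem left_order_gap {V : Type*} [DecidableEq V] [Fintype V]
    (σ : V → Finset V → ℝ) (t : List V) (vn : V)
    (hnd : (t ++ [vn]).Nodup)
    (hindep : shat σ vn (Finset.univ \ (t ++ [vn]).toFinset) = shat σ vn ∅)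
    (h : V) (hdormant : h ∉ (t ++ [vn]).toFinset) :
    sSup {x : ℝ | ∃ w : List V, w.Nodup ∧ w.toFinset = Finset.univ ∧
        (t ++ [vn] ++ [h]) <+: w ∧ x = scoreL σ w ∅} ≤
      sSup {x : ℝ | ∃ w : List V, w.Nodup ∧ w.toFinset = Finset.univ ∧
        (t ++ [h]) <+: w ∧ x = scoreL σ w ∅} := by
  -- RHS set is bounded above
  have hbdd : BddAbove {x : ℝ | ∃ w : List V, w.Nodup ∧ w.toFinset = Finset.univ ∧
      (t ++ [h]) <+: w ∧ x = scoreL σ w ∅} := by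
    have hsub : {x : ℝ | ∃ w : List V, w.Nodup ∧ w.toFinset = Finset.univ ∧
        (t ++ [h]) <+: w ∧ x = scoreL σ w ∅} ⊆
        (fun l => scoreL σ l ∅) '' {l | l ∈ (Finset.univ : Finset V).toList.permutations} := by
      rintro x ⟨w, hw1, hw2, _, rfl⟩
      refine ⟨w, ?_, rfl⟩
      simp only [Set.mem_setOf_eq, List.mem_permutations]
      exact List.perm_of_nodup_nodup_toFinset_eq hw1 (Finset.nodup_toList _)
        (by rw [hw2, Finset.toList_toFinset])
    exact (((Finset.univ : Finset V).toList.permutations.finite_toSet).image _).bddAbove.mono hsub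
  -- nonempty LHS: extend by remaining nodes
  have hndL : (t ++ [vn] ++ [h]).Nodup := by
    rw [List.nodup_append]
    exact ⟨hnd, List.nodup_singleton h, fun a ha b hb => by
      simp only [List.mem_singleton] at hb
      subst hb
      rintro rfl
      exact hdormant (List.mem_toFinset.mpr ha)⟩
  have hLne : {x : ℝ | ∃ w : List V, w.Nodup ∧ w.toFinset = Finset.univ ∧
      (t ++ [vn] ++ [h]) <+: w ∧ x = scoreL σ w ∅}.Nonempty := by
    set p := t ++ [vn] ++ [h]
    set w₀ := p ++ (Finset.univ \ p.toFinset).toList with hw₀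
    have hnodup : w₀.Nodup := by
      rw [hw₀, List.nodup_append]
      refine ⟨hndL, Finset.nodup_toList _, ?_⟩
      intro a ha b hb
      have := Finset.mem_toList.mp hb
      rw [Finset.mem_sdiff] at this
      rintro rfl
      exact this.2 (List.mem_toFinset.mpr ha)
    refine ⟨scoreL σ w₀ ∅, w₀, hnodup, ?_, ⟨_, rfl⟩, rfl⟩
    rw [hw₀, List.toFinset_append, Finset.toList_toFinset]
    exact Finset.union_sdiff_of_subset (Finset.subset_univ _)
  apply csSup_le hLne
  rintro x ⟨w, hw1, hw2, ⟨r, hr⟩, rfl⟩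
  subst hr
  -- reassociate
  have heq1 : t ++ [vn] ++ [h] ++ r = (t ++ [vn]) ++ (h :: r) := by
    rw [List.append_assoc]; rfl
  have heq1' : t ++ [vn] ++ [h] ++ r = t ++ (vn :: h :: r) := by simp
  have heq2 : t ++ [h] ++ ([vn] ++ r) = t ++ (h :: vn :: r) := by simp
  have hw1' : ((t ++ [vn]) ++ (h :: r)).Nodup := heq1 ▸ hw1
  have hw2' : ((t ++ [vn]) ++ (h :: r)).toFinset = Finset.univ := heq1 ▸ hw2
  rw [List.nodup_append] at hw1'
  have disj : (t ++ [vn]).Disjoint (h :: r) := fun a ha hb => hw1'.2.2 a ha a hb rfl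
  -- key set identity: {h} ∪ r = univ \ (t ++ [vn])
  have hset : insert h r.toFinset = Finset.univ \ (t ++ [vn]).toFinset := by
    ext a
    simp only [Finset.mem_sdiff, Finset.mem_univ, true_and]
    constructor
    · intro ha hL
      have haL : a ∈ t ++ [vn] := List.mem_toFinset.mp hL
      have hhr : a ∈ h :: r := by
        rcases Finset.mem_insert.mp ha with rfl | har
        · exact List.mem_cons_self
        · exact List.mem_cons_of_mem _ (List.mem_toFinset.mp har)
      exact disj haL hhr
    · intro hL
      have hmem : a ∈ ((t ++ [vn]) ++ (h :: r)).toFinset := by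
        rw [hw2']; exact Finset.mem_univ a
      rw [List.toFinset_append, Finset.mem_union] at hmem
      rcases hmem with hA | hB
      · exact absurd hA hL
      · rw [List.toFinset_cons] at hB
        exact hB
  -- the score comparison on the tails
  have h1 : shat σ vn ((h :: r).toFinset ∪ ∅) ≤ shat σ vn (r.toFinset ∪ ∅) := by
    rw [Finset.union_empty, Finset.union_empty, List.toFinset_cons, hset, hindep]
    exact shat_mono σ vn (Finset.empty_subset _)
  have h2 : shat σ h (r.toFinset ∪ ∅) ≤ shat σ h ((vn :: r).toFinset ∪ ∅) := by
    apply shat_mono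
    rw [List.toFinset_cons]
    exact Finset.union_subset_union_left (Finset.subset_insert _ _)
  have hkey : scoreL σ (vn :: h :: r) ∅ ≤ scoreL σ (h :: vn :: r) ∅ := by
    simp only [scoreL]
    simp only [List.toFinset_cons] at h1 h2 ⊢
    linarith
  have hsame : (vn :: h :: r).toFinset = (h :: vn :: r).toFinset := by
    simp only [List.toFinset_cons]
    ext a; simp; tauto
  have hperm : List.Perm (t ++ (vn :: h :: r)) (t ++ (h :: vn :: r)) :=
    List.Perm.append_left t (List.Perm.swap h vn r)
  have hcomp : scoreL σ (t ++ [vn] ++ [h] ++ r) ∅ ≤ scoreL σ (t ++ [h] ++ ([vn] ++ r)) ∅ := by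
    rw [heq1', heq2]
    exact scoreL_mono_append σ t hsame hkey
  refine le_trans hcomp (le_csSup hbdd ?_)
  refine ⟨t ++ [h] ++ ([vn] ++ r), ?_, ?_, ⟨_, rfl⟩, rfl⟩
  · rw [heq2]
    exact hperm.nodup (heq1' ▸ hw1)
  · rw [heq2, ← List.toFinset_eq_of_perm _ _ hperm, ← heq1', hw2]
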